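/- Let H(x₁,x₂) = −x₂ + x₂²x₁ − 2 + 2x₂x₁ + x₁. There are no critical points of H for the direction α = (1,1): no point x ∈ ℂ² satisfies both H(x) = 0 and x₁·∂₁H(x) = x₂·∂₂H(x). -/

import Mathlib

open MvPolynomial

/-! Writing `H = x₁(x₂ + 1)² - (x₂ + 2)`, the critical equation `x₁ ∂₁H = x₂ ∂₂H` simplifies to
`x₁(1 - x₂²) + x₂ = 0`. Multiplying `H = 0` by `1 - x₂` and this equation by `1 + x₂` expresses
`x₁(1 - x₂)(1 + x₂)²` in two ways, whose difference is the constant `2`. -/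

noncomputable def basicPoly (R : Type*) [CommRing R] : MvPolynomial (Fin 2) R :=
  -X 1 + (X 1) ^ 2 * X 0 - 2 + 2 * X 1 * X 0 + X 0

theorem pderiv_ofNat {σ R : Type*} [CommSemiring R] (i : σ) (n : ℕ) [n.AtLeastTwo] :
    pderiv i (ofNat(n) : MvPolynomial σ R) = 0 := by
  rw [← map_ofNat C n, pderiv_C]

section

variable {R : Type*} [CommRing R]

theorem eval_basicPoly (x : Fin 2 → R) :
    eval x (basicPoly R) = x 0 * (x 1 + 1) ^ 2 - (x 1 + 2) := by
  simp only [basicPoly, map_add, map_sub, map_neg, map_mul, map_pow, map_ofNat, eval_X]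
  ring

theorem eval_pderiv_zero_basicPoly (x : Fin 2 → R) :
    eval x (pderiv 0 (basicPoly R)) = (x 1 + 1) ^ 2 := by
  simp only [basicPoly, map_add, map_sub, map_neg, map_mul, map_pow, map_ofNat, map_zero, map_one,
    eval_X, Derivation.leibniz, Derivation.leibniz_pow, pderiv_X, pderiv_ofNat, smul_eq_mul,
    nsmul_eq_mul, Nat.cast_ofNat, Nat.add_one_sub_one, pow_one, Pi.single_eq_same,
    Pi.single_eq_of_ne one_ne_zero]
  ring

theorem eval_pderiv_one_basicPoly (x : Fin 2 → R) :
    eval x (pderiv 1 (basicPoly R)) = 2 * x 0 * (x 1 + 1) - 1 := by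
  simp only [basicPoly, map_add, map_sub, map_neg, map_mul, map_pow, map_ofNat, map_zero, map_one,
    eval_X, Derivation.leibniz, Derivation.leibniz_pow, pderiv_X, pderiv_ofNat, smul_eq_mul,
    nsmul_eq_mul, Nat.cast_ofNat, Nat.add_one_sub_one, pow_one, Pi.single_eq_same,
    Pi.single_eq_of_ne zero_ne_one]
  ring

theorem two_eq_zero_of_basicPoly_critical {a b : R} (hH : a * (b + 1) ^ 2 - (b + 2) = 0)
    (hcrit : a * (b + 1) ^ 2 = b * (2 * a * (b + 1) - 1)) : (2 : R) = 0 := by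
  linear_combination (b - 1) * hH + (b + 1) * hcrit

end

/-- `H(x₁,x₂) = -x₂ + x₂²x₁ - 2 + 2x₂x₁ + x₁` has no critical points for the
direction `α = (1,1)`. -/
theorem basic_univariate_no_critical_points
    (H : MvPolynomial (Fin 2) ℂ)
    (hH : H = -X 1 + (X 1) ^ 2 * X 0 - 2 + 2 * X 1 * X 0 + X 0) :
    ¬ ∃ x : Fin 2 → ℂ,
      eval x H = 0 ∧ x 0 * eval x (pderiv 0 H) = x 1 * eval x (pderiv 1 H) := by
  rintro ⟨x, hzero, hcrit⟩
  change H = basicPoly ℂ at hH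
  subst hH
  rw [eval_basicPoly] at hzero
  rw [eval_pderiv_zero_basicPoly, eval_pderiv_one_basicPoly] at hcrit
  exact two_ne_zero (two_eq_zero_of_basicPoly_critical hzero hcrit)
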